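/- arXiv:2407.16998 — 2 statements merged into one kernel-verified Lean document; each statement's English description precedes it below -/
import Mathlib

section
/- Let A ∈ ℝ^{m×n}, b ∈ ℝ^m and ε ≥ 0, and suppose that either A has full row rank or ε > 0, and that b lies in the range of A. Let C = {x ∈ ℝⁿ : ‖Ax − b‖ ≤ ε}. Then for every x ∈ ℝⁿ: if ‖Ax − b‖ ≤ ε then P_C(x) = x; otherwise P_C(x) = x − Aᵀ(AAᵀ + ε τ_x I)⁻¹(Ax − b), where τ_x is the unique positive real number satisfying 1 = τ_x ‖(AAᵀ + ε τ_x I)⁻¹(Ax − b)‖. -/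
/-!
Write `M τ = AAᵀ + ετI`, `r = Ax − b` and `y = (M τ)⁻¹ r`. The point `u = x − Aᵀy` satisfies
`Au − b = ετ • y`, so the normalisation `τ‖y‖ = 1` puts `u` on the boundary `‖Au − b‖ = ε`, and for
`w ∈ C` Cauchy–Schwarz gives the variational inequality `⟪x − u, w − u⟫ = ⟪Aw − b, y⟫ − ε‖y‖ ≤ 0`,
which characterises `u` as the projection.

A normalising `τ` exists by the intermediate value theorem on `(0, ∞)`: writing `r = AAᵀz`
(possible because `r` lies in the range of `A`), `τ‖y‖ ≤ τ‖z‖` is small near `0`, while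
`‖r‖ ≤ (‖AAᵀ‖ + ετ)‖y‖` and `‖r‖ > ε` force `τ‖y‖ ≥ 1` for large `τ`. Two normalising values give
the same projection, hence proportional vectors `y`, and they can only differ if `Aᵀy = 0`, that
is, if `x` itself lies in `C`.
-/

/-- Euclidean norm of a vector in ℝ^k. -/
noncomputable def vecNorm {k : ℕ} (v : Fin k → ℝ) : ℝ := Real.sqrt (∑ i, v i ^ 2)

/-- `u` is the projection of `x` onto `C`: it belongs to `C` and minimizes the distance to `x`. -/
def IsProjOn {k : ℕ} (C : Set (Fin k → ℝ)) (x u : Fin k → ℝ) : Prop :=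
  u ∈ C ∧ ∀ w ∈ C, vecNorm (u - x) ≤ vecNorm (w - x)

open Matrix Set Filter Topology
open scoped RealInnerProductSpace

section vecNorm
variable {k : ℕ}

lemma vecNorm_eq_norm_toLp (v : Fin k → ℝ) : vecNorm v = ‖WithLp.toLp 2 v‖ := by
  simp [vecNorm, EuclideanSpace.norm_eq]

lemma dotProduct_eq_inner_toLp (u v : Fin k → ℝ) :
    u ⬝ᵥ v = ⟪WithLp.toLp 2 u, WithLp.toLp 2 v⟫ := by
  simp [EuclideanSpace.inner_toLp_toLp, dotProduct_comm]

lemma vecNorm_nonneg (v : Fin k → ℝ) : 0 ≤ vecNorm v := Real.sqrt_nonneg _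

lemma vecNorm_smul (c : ℝ) (v : Fin k → ℝ) : vecNorm (c • v) = |c| * vecNorm v := by
  simp [vecNorm_eq_norm_toLp, norm_smul]

lemma vecNorm_add_le (u v : Fin k → ℝ) : vecNorm (u + v) ≤ vecNorm u + vecNorm v := by
  simpa [vecNorm_eq_norm_toLp] using norm_add_le _ _

lemma vecNorm_sq (v : Fin k → ℝ) : vecNorm v ^ 2 = v ⬝ᵥ v := by
  simp [vecNorm_eq_norm_toLp, dotProduct_eq_inner_toLp]

lemma dotProduct_le_vecNorm_mul (u v : Fin k → ℝ) : u ⬝ᵥ v ≤ vecNorm u * vecNorm v := by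
  simpa [vecNorm_eq_norm_toLp, dotProduct_eq_inner_toLp] using real_inner_le_norm _ _

lemma continuous_vecNorm : Continuous (vecNorm (k := k)) := by
  simpa [funext vecNorm_eq_norm_toLp] using (PiLp.continuous_toLp 2 _).norm

lemma vecNorm_le_vecNorm_add_of_dotProduct_nonneg {u v : Fin k → ℝ} (h : 0 ≤ u ⬝ᵥ v) :
    vecNorm u ≤ vecNorm (u + v) := by
  refine le_of_pow_le_pow_left₀ two_ne_zero (vecNorm_nonneg _) ?_
  have hv : 0 ≤ v ⬝ᵥ v := by rw [← vecNorm_sq]; positivity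
  rw [vecNorm_sq, vecNorm_sq, add_dotProduct, dotProduct_add, dotProduct_add, dotProduct_comm v u]
  linarith

lemma exists_vecNorm_mulVec_le {m : ℕ} (B : Matrix (Fin m) (Fin k) ℝ) :
    ∃ K, 0 ≤ K ∧ ∀ v, vecNorm (B *ᵥ v) ≤ K * vecNorm v := by
  open scoped Matrix.Norms.L2Operator in
  exact ⟨‖B‖, norm_nonneg B, fun v => by
    simpa [vecNorm_eq_norm_toLp] using B.l2_opNorm_mulVec (WithLp.toLp 2 v)⟩

end vecNorm

lemma norm_sub_sq_add_norm_sub_sq_le {E : Type*} [NormedAddCommGroup E] [InnerProductSpace ℝ E]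
    {x u w : E} (h : ⟪x - u, w - u⟫ ≤ 0) : ‖w - u‖ ^ 2 + ‖u - x‖ ^ 2 ≤ ‖w - x‖ ^ 2 := by
  have : ⟪w - u, u - x⟫ = -⟪x - u, w - u⟫ := by
    rw [real_inner_comm, ← inner_neg_left, neg_sub]
  rw [← sub_add_sub_cancel w u x, norm_add_sq_real, this]
  linarith

theorem isProjOn_iff_eq_of_dotProduct_le {k : ℕ} {C : Set (Fin k → ℝ)} {x u : Fin k → ℝ}
    (hu : u ∈ C) (hC : ∀ w ∈ C, (x - u) ⬝ᵥ (w - u) ≤ 0) (v : Fin k → ℝ) :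
    IsProjOn C x v ↔ v = u := by
  have key : ∀ w ∈ C, vecNorm (w - u) ^ 2 + vecNorm (u - x) ^ 2 ≤ vecNorm (w - x) ^ 2 := by
    intro w hw
    have hinner := hC w hw
    rw [dotProduct_eq_inner_toLp, WithLp.toLp_sub, WithLp.toLp_sub] at hinner
    simpa [vecNorm_eq_norm_toLp] using norm_sub_sq_add_norm_sub_sq_le hinner
  constructor
  · rintro ⟨hv, hmin⟩
    have hle := pow_le_pow_left₀ (vecNorm_nonneg _) (hmin u hu) 2
    have hzero : vecNorm (v - u) ^ 2 ≤ 0 := by linarith [key v hv]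
    simpa [vecNorm_eq_norm_toLp, sub_eq_zero] using hzero
  · rintro rfl
    refine ⟨hu, fun w hw => ?_⟩
    exact le_of_pow_le_pow_left₀ two_ne_zero (vecNorm_nonneg _) (by nlinarith [key w hw])

lemma posSemidef_mul_transpose_self {m n : Type*} [Fintype m] [Fintype n] (A : Matrix m n ℝ) :
    (A * Aᵀ).PosSemidef := by
  simpa using posSemidef_self_mul_conjTranspose A

lemma exists_mul_transpose_mulVec_eq {m n : Type*} [Fintype m] [Fintype n] (A : Matrix m n ℝ)
    {r : m → ℝ} (hr : ∃ w, A *ᵥ w = r) : ∃ z, (A * Aᵀ) *ᵥ z = r := by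
  have hrange : LinearMap.range (A * Aᵀ).mulVecLin = LinearMap.range A.mulVecLin := by
    refine Submodule.eq_of_le_of_finrank_eq ?_ (rank_self_mul_transpose A)
    rw [mulVecLin_mul]
    exact LinearMap.range_comp_le_range _ _
  obtain ⟨w, rfl⟩ := hr
  exact (hrange ▸ LinearMap.mem_range_self A.mulVecLin w :)

lemma inv_mulVec_eq_of_mulVec_eq {m : Type*} [Fintype m] [DecidableEq m] {M : Matrix m m ℝ}
    (hM : IsUnit M.det) {u v : m → ℝ} (h : M *ᵥ v = u) : M⁻¹ *ᵥ u = v := by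
  rw [← h, mulVec_mulVec, nonsing_inv_mul _ hM, one_mulVec]

section regGram
variable {m n : Type*} [Fintype m] [Fintype n] [DecidableEq m] (A : Matrix m n ℝ)

def regGram (c : ℝ) : Matrix m m ℝ := A * Aᵀ + c • 1

lemma regGram_mulVec (c : ℝ) (v : m → ℝ) : regGram A c *ᵥ v = (A * Aᵀ) *ᵥ v + c • v := by
  rw [regGram, add_mulVec, smul_mulVec, one_mulVec]

lemma regGram_mulVec_inv_mulVec {c : ℝ} (hc : IsUnit (regGram A c).det) (r : m → ℝ) :
    regGram A c *ᵥ ((regGram A c)⁻¹ *ᵥ r) = r := by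
  rw [mulVec_mulVec, mul_nonsing_inv _ hc, one_mulVec]

lemma posDef_regGram {c : ℝ} (hc : 0 ≤ c) (h : LinearIndependent ℝ (fun i => A i) ∨ 0 < c) :
    (regGram A c).PosDef := by
  rcases h with hA | hc
  · have hAA : (A * Aᵀ).PosDef := by
      simpa using PosDef.mul_conjTranspose_self A (vecMul_injective_iff.mpr hA)
    exact hAA.add_posSemidef (PosSemidef.one.smul hc)
  · exact PosDef.posSemidef_add (posSemidef_mul_transpose_self A) (PosDef.one.smul hc)

lemma isUnit_det_regGram_mul {ε τ : ℝ} (hε : 0 ≤ ε)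
    (hrank : LinearIndependent ℝ (fun i => A i) ∨ 0 < ε) (hτ : 0 < τ) :
    IsUnit (regGram A (ε * τ)).det :=
  (isUnit_iff_isUnit_det _).mp <| (posDef_regGram A (by positivity)
    (hrank.imp_right fun hεpos => by positivity)).isUnit

lemma mulVec_sub_transpose_mulVec_regGram_inv {c : ℝ} (hc : IsUnit (regGram A c).det)
    (b : m → ℝ) (x : n → ℝ) :
    A *ᵥ (x - Aᵀ *ᵥ ((regGram A c)⁻¹ *ᵥ (A *ᵥ x - b))) - b
      = c • ((regGram A c)⁻¹ *ᵥ (A *ᵥ x - b)) := by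
  set y := (regGram A c)⁻¹ *ᵥ (A *ᵥ x - b)
  have hy : (A * Aᵀ) *ᵥ y + c • y = A *ᵥ x - b := by
    rw [← regGram_mulVec, regGram_mulVec_inv_mulVec A hc]
  rw [mulVec_sub, mulVec_mulVec, sub_right_comm, ← hy]
  abel

lemma regGram_inv_mulVec_mul_transpose_mulVec {c : ℝ} (hc : IsUnit (regGram A c).det)
    (z : m → ℝ) :
    (regGram A c)⁻¹ *ᵥ ((A * Aᵀ) *ᵥ z) = (A * Aᵀ) *ᵥ ((regGram A c)⁻¹ *ᵥ z) := by
  have hcomm : regGram A c * (A * Aᵀ) = (A * Aᵀ) * regGram A c := by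
    simp only [regGram, add_mul, mul_add, Matrix.smul_mul, Matrix.mul_smul, one_mul, mul_one]
  refine inv_mulVec_eq_of_mulVec_eq hc ?_
  rw [mulVec_mulVec, hcomm, ← mulVec_mulVec, regGram_mulVec_inv_mulVec A hc]

end regGram

section
variable {m n : ℕ} (A : Matrix (Fin m) (Fin n) ℝ)

theorem isProjOn_iff_eq_sub_transpose_mulVec_regGram_inv (b : Fin m → ℝ) {ε τ : ℝ}
    (hε : 0 ≤ ε) (hrank : LinearIndependent ℝ (fun i => A i) ∨ 0 < ε) (hτ : 0 < τ)
    (x : Fin n → ℝ) (hτx : 1 = τ * vecNorm ((regGram A (ε * τ))⁻¹ *ᵥ (A *ᵥ x - b)))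
    (v : Fin n → ℝ) :
    IsProjOn {w | vecNorm (A *ᵥ w - b) ≤ ε} x v ↔
      v = x - Aᵀ *ᵥ ((regGram A (ε * τ))⁻¹ *ᵥ (A *ᵥ x - b)) := by
  have hres := mulVec_sub_transpose_mulVec_regGram_inv A
    (isUnit_det_regGram_mul A hε hrank hτ) b x
  set y := (regGram A (ε * τ))⁻¹ *ᵥ (A *ᵥ x - b)
  have hy : (ε * τ) • y ⬝ᵥ y = ε * vecNorm y := by
    rw [smul_dotProduct, ← vecNorm_sq, smul_eq_mul]
    linear_combination -ε * vecNorm y * hτx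
  refine isProjOn_iff_eq_of_dotProduct_le ?_ (fun w (hw : vecNorm _ ≤ ε) => ?_) v
  · show vecNorm _ ≤ ε
    rw [hres, vecNorm_smul, abs_of_nonneg (by positivity), mul_assoc, ← hτx, mul_one]
  · have hAw : (A *ᵥ w - b) ⬝ᵥ y ≤ ε * vecNorm y :=
      (dotProduct_le_vecNorm_mul _ _).trans (by gcongr; exact vecNorm_nonneg y)
    calc (x - (x - Aᵀ *ᵥ y)) ⬝ᵥ (w - (x - Aᵀ *ᵥ y))
        = (A *ᵥ w - b) ⬝ᵥ y - (A *ᵥ (x - Aᵀ *ᵥ y) - b) ⬝ᵥ y := by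
          rw [sub_sub_cancel, mulVec_transpose, ← dotProduct_mulVec, ← sub_dotProduct,
            dotProduct_comm, mulVec_sub, sub_sub_sub_cancel_right]
      _ ≤ 0 := by rw [hres, hy]; linarith

lemma vecNorm_regGram_inv_mulVec_mul_transpose_mulVec_le {c : ℝ} (hc : 0 ≤ c)
    (hdet : IsUnit (regGram A c).det) (z : Fin m → ℝ) :
    vecNorm ((regGram A c)⁻¹ *ᵥ ((A * Aᵀ) *ᵥ z)) ≤ vecNorm z := by
  rw [regGram_inv_mulVec_mul_transpose_mulVec A hdet]
  set v := (regGram A c)⁻¹ *ᵥ z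
  have hz : (A * Aᵀ) *ᵥ v + c • v = z := by
    rw [← regGram_mulVec, regGram_mulVec_inv_mulVec A hdet]
  rw [← hz]
  refine vecNorm_le_vecNorm_add_of_dotProduct_nonneg ?_
  rw [dotProduct_smul, dotProduct_comm]
  exact smul_nonneg hc
    (by simpa using (posSemidef_mul_transpose_self A).dotProduct_mulVec_nonneg v)

lemma vecNorm_le_mul_vecNorm_regGram_inv_mulVec {K c : ℝ} (hc : 0 ≤ c)
    (hK : ∀ v, vecNorm ((A * Aᵀ) *ᵥ v) ≤ K * vecNorm v) (hdet : IsUnit (regGram A c).det)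
    (r : Fin m → ℝ) : vecNorm r ≤ (K + c) * vecNorm ((regGram A c)⁻¹ *ᵥ r) := by
  set y := (regGram A c)⁻¹ *ᵥ r
  calc vecNorm r = vecNorm ((A * Aᵀ) *ᵥ y + c • y) := by
        rw [← regGram_mulVec, regGram_mulVec_inv_mulVec A hdet]
    _ ≤ vecNorm ((A * Aᵀ) *ᵥ y) + vecNorm (c • y) := vecNorm_add_le _ _
    _ ≤ K * vecNorm y + c * vecNorm y := by
        rw [vecNorm_smul, abs_of_nonneg hc]
        gcongr
        exact hK y
    _ = (K + c) * vecNorm y := by ring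

lemma continuousOn_mul_vecNorm_regGram_inv_mulVec {ε : ℝ} (hε : 0 ≤ ε)
    (hrank : LinearIndependent ℝ (fun i => A i) ∨ 0 < ε) (r : Fin m → ℝ) :
    ContinuousOn (fun τ => τ * vecNorm ((regGram A (ε * τ))⁻¹ *ᵥ r)) (Ioi 0) := by
  have hinv : ContinuousOn (fun τ => (regGram A (ε * τ))⁻¹) (Ioi 0) := fun τ hτ => by
    have hdet := (isUnit_det_regGram_mul A hε hrank hτ).ne_zero
    refine ContinuousAt.continuousWithinAt <| ContinuousAt.comp (g := Inv.inv)
      (continuousAt_matrix_inv _ ?_) (by unfold regGram; fun_prop)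
    simpa [Ring.inverse_eq_inv'] using continuousAt_inv₀ hdet
  exact continuousOn_id.mul <| (continuous_vecNorm.comp
    (continuous_id.matrix_mulVec continuous_const)).comp_continuousOn hinv

theorem exists_pos_mul_vecNorm_regGram_inv_mulVec_eq_one {ε : ℝ} (hε : 0 ≤ ε)
    (hrank : LinearIndependent ℝ (fun i => A i) ∨ 0 < ε)
    {r : Fin m → ℝ} (hr : ∃ w, A *ᵥ w = r) (hεr : ε < vecNorm r) :
    ∃ τ, 0 < τ ∧ 1 = τ * vecNorm ((regGram A (ε * τ))⁻¹ *ᵥ r) := by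
  set f := fun τ => τ * vecNorm ((regGram A (ε * τ))⁻¹ *ᵥ r)
  obtain ⟨z, hz⟩ := exists_mul_transpose_mulVec_eq A hr
  obtain ⟨K, hK0, hK⟩ := exists_vecNorm_mulVec_le (A * Aᵀ)
  have hz0 := vecNorm_nonneg z
  have hsmall : ∀ᶠ τ in 𝓝[>] 0, f τ ≤ 1 := by
    filter_upwards [Ioo_mem_nhdsGT (by positivity : (0 : ℝ) < 1 / (vecNorm z + 1))]
      with τ ⟨hτ, hτz⟩
    have hfz : f τ ≤ τ * vecNorm z := by
      simp only [f, ← hz]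
      exact mul_le_mul_of_nonneg_left (vecNorm_regGram_inv_mulVec_mul_transpose_mulVec_le A
        (by positivity) (isUnit_det_regGram_mul A hε hrank hτ) z) hτ.le
    rw [lt_div_iff₀ (by positivity)] at hτz
    linarith
  have hlarge : ∀ᶠ τ in atTop, 1 ≤ f τ := by
    filter_upwards [eventually_ge_atTop ((K + 1) / (vecNorm r - ε))] with τ hτ
    rw [div_le_iff₀ (by linarith)] at hτ
    have hτ0 : 0 < τ := by nlinarith
    have hr := vecNorm_le_mul_vecNorm_regGram_inv_mulVec A (by positivity) hK
      (isUnit_det_regGram_mul A hε hrank hτ0) r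
    have hy := vecNorm_nonneg ((regGram A (ε * τ))⁻¹ *ᵥ r)
    by_contra! hlt
    -- `τ‖r‖ ≤ (K + ετ) τ‖y‖ < K + ετ + 1 ≤ τ‖r‖`
    nlinarith [mul_le_mul_of_nonneg_left hr hτ0.le, mul_le_mul_of_nonneg_left hlt.le
      (by positivity : 0 ≤ K + ε * τ)]
  obtain ⟨τ, hτ, hτf⟩ := isPreconnected_Ioi.intermediate_value₂_eventually₂ (l₁ := 𝓝[>] 0)
    inf_le_right (le_principal_iff.mpr (Ioi_mem_atTop 0))
    (continuousOn_mul_vecNorm_regGram_inv_mulVec A hε hrank _) continuousOn_const hsmall hlarge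
  exact ⟨τ, hτ, hτf.symm⟩

theorem eq_of_mul_vecNorm_regGram_inv_mulVec_eq_one {ε : ℝ} (hε : 0 ≤ ε)
    (hrank : LinearIndependent ℝ (fun i => A i) ∨ 0 < ε)
    (b : Fin m → ℝ) (x : Fin n → ℝ) (hx : ε < vecNorm (A *ᵥ x - b))
    {τ₁ τ₂ : ℝ} (hτ₁ : 0 < τ₁) (hτ₂ : 0 < τ₂)
    (h₁ : 1 = τ₁ * vecNorm ((regGram A (ε * τ₁))⁻¹ *ᵥ (A *ᵥ x - b)))
    (h₂ : 1 = τ₂ * vecNorm ((regGram A (ε * τ₂))⁻¹ *ᵥ (A *ᵥ x - b))) : τ₁ = τ₂ := by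
  rcases hε.eq_or_lt with rfl | hεpos
  · -- for `ε = 0` the matrix does not depend on `τ`
    simp only [zero_mul] at h₁ h₂
    exact mul_right_cancel₀ (right_ne_zero_of_mul (h₁ ▸ one_ne_zero)) (h₁.symm.trans h₂)
  have hproj₁ := isProjOn_iff_eq_sub_transpose_mulVec_regGram_inv A b hε hrank hτ₁ x h₁
  have hproj₂ := isProjOn_iff_eq_sub_transpose_mulVec_regGram_inv A b hε hrank hτ₂ x h₂
  have hres₁ := mulVec_sub_transpose_mulVec_regGram_inv A
    (isUnit_det_regGram_mul A hε hrank hτ₁) b x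
  have hres₂ := mulVec_sub_transpose_mulVec_regGram_inv A
    (isUnit_det_regGram_mul A hε hrank hτ₂) b x
  set y₁ := (regGram A (ε * τ₁))⁻¹ *ᵥ (A *ᵥ x - b)
  set y₂ := (regGram A (ε * τ₂))⁻¹ *ᵥ (A *ᵥ x - b)
  have hu : x - Aᵀ *ᵥ y₁ = x - Aᵀ *ᵥ y₂ := (hproj₂ _).mp ((hproj₁ _).mpr rfl)
  have hy : τ₁ • y₁ = τ₂ • y₂ := by
    rw [hu, hres₂, mul_smul, mul_smul] at hres₁
    exact smul_right_injective _ hεpos.ne' hres₁.symm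
  have hAy : τ₁ • Aᵀ *ᵥ y₁ = τ₂ • Aᵀ *ᵥ y₁ := by
    rw [← mulVec_smul, hy, mulVec_smul, sub_right_injective hu]
  by_contra hne
  have hAy₁ : Aᵀ *ᵥ y₁ = 0 := by
    by_contra h0
    exact hne (smul_left_injective ℝ h0 hAy)
  have hmem : vecNorm (A *ᵥ (x - Aᵀ *ᵥ y₁) - b) ≤ ε := ((hproj₁ _).mpr rfl).1
  rw [hAy₁, sub_zero] at hmem
  exact hmem.not_gt hx

end

theorem stmt0 {m n : ℕ} (A : Matrix (Fin m) (Fin n) ℝ) (b : Fin m → ℝ) (ε : ℝ)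
    (hε : 0 ≤ ε)
    (hrank : LinearIndependent ℝ (fun i : Fin m => A i) ∨ 0 < ε)
    (hb : ∃ x : Fin n → ℝ, A.mulVec x = b)
    (C : Set (Fin n → ℝ)) (hC : C = {x | vecNorm (A.mulVec x - b) ≤ ε}) :
    ∀ x : Fin n → ℝ,
      (vecNorm (A.mulVec x - b) ≤ ε → ∀ u, IsProjOn C x u ↔ u = x) ∧
      (ε < vecNorm (A.mulVec x - b) →
        (∃! τ : ℝ, 0 < τ ∧
          1 = τ * vecNorm ((A * A.transpose +
            (ε * τ) • (1 : Matrix (Fin m) (Fin m) ℝ))⁻¹.mulVec (A.mulVec x - b))) ∧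
        ∀ τ : ℝ, 0 < τ →
          1 = τ * vecNorm ((A * A.transpose +
            (ε * τ) • (1 : Matrix (Fin m) (Fin m) ℝ))⁻¹.mulVec (A.mulVec x - b)) →
          ∀ u, IsProjOn C x u ↔
            u = x - A.transpose.mulVec ((A * A.transpose +
              (ε * τ) • (1 : Matrix (Fin m) (Fin m) ℝ))⁻¹.mulVec (A.mulVec x - b))) := by
  subst hC
  intro x
  refine ⟨fun hx u => isProjOn_iff_eq_of_dotProduct_le hx (by simp) u, fun hx => ?_⟩
  have hr : ∃ w, A *ᵥ w = A *ᵥ x - b := by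
    obtain ⟨x₀, rfl⟩ := hb
    exact ⟨x - x₀, mulVec_sub A x x₀⟩
  obtain ⟨τ, hτ, hτx⟩ := exists_pos_mul_vecNorm_regGram_inv_mulVec_eq_one A hε hrank hr hx
  refine ⟨⟨τ, ⟨hτ, hτx⟩, fun τ' ⟨hτ', hτ'x⟩ =>
    eq_of_mul_vecNorm_regGram_inv_mulVec_eq_one A hε hrank b x hx hτ' hτ hτ'x hτx⟩,
    fun τ hτ hτx u => isProjOn_iff_eq_sub_transpose_mulVec_regGram_inv A b hε hrank hτ x hτx u⟩
end

section
/- Let M ∈ ℝ^{n₁×n₂} and ε ≥ 0, and let C = {(X_L, X_S) ∈ ℝ^{n₁×n₂} × ℝ^{n₁×n₂} : ‖X_L + X_S − M‖_F ≤ ε}. Then for every Z = (Z_L, Z_S), the projection of Z onto C is (Z_L − μ_Z R, Z_S − μ_Z R), where R = Z_L + Z_S − M and μ_Z = max{0, (‖R‖_F − ε)/(2‖R‖_F)}, with the convention μ_Z = 0 when R = 0. -/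
/-- Frobenius norm of a real matrix. -/
noncomputable def froNorm {a b : ℕ} (X : Matrix (Fin a) (Fin b) ℝ) : ℝ :=
  Real.sqrt (∑ i, ∑ j, X i j ^ 2)

/-- Norm on the product space of two matrix spaces, induced by the sum of the
Frobenius inner products of the components. -/
noncomputable def pairNorm {a b : ℕ}
    (P : Matrix (Fin a) (Fin b) ℝ × Matrix (Fin a) (Fin b) ℝ) : ℝ :=
  Real.sqrt ((∑ i, ∑ j, P.1 i j ^ 2) + (∑ i, ∑ j, P.2 i j ^ 2))

namespace Stmt12Aux

variable {a b : ℕ}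

/-- Frobenius inner product. -/
noncomputable def ip (X Y : Matrix (Fin a) (Fin b) ℝ) : ℝ := ∑ i, ∑ j, X i j * Y i j

lemma ip_comm (X Y : Matrix (Fin a) (Fin b) ℝ) : ip X Y = ip Y X := by
  simp [ip, mul_comm]

lemma ip_add_left (X Y W : Matrix (Fin a) (Fin b) ℝ) :
    ip (X + Y) W = ip X W + ip Y W := by
  simp [ip, add_mul, Finset.sum_add_distrib]

lemma ip_smul_left (c : ℝ) (X W : Matrix (Fin a) (Fin b) ℝ) :
    ip (c • X) W = c * ip X W := by
  simp [ip, Finset.mul_sum, mul_assoc]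

lemma ip_self_nonneg (X : Matrix (Fin a) (Fin b) ℝ) : 0 ≤ ip X X :=
  Finset.sum_nonneg fun _ _ => Finset.sum_nonneg fun _ _ => mul_self_nonneg _

lemma froNorm_eq (X : Matrix (Fin a) (Fin b) ℝ) : froNorm X = Real.sqrt (ip X X) := by
  simp [froNorm, ip, pow_two]

lemma sq_froNorm (X : Matrix (Fin a) (Fin b) ℝ) : froNorm X ^ 2 = ip X X := by
  rw [froNorm_eq, Real.sq_sqrt (ip_self_nonneg X)]

lemma froNorm_nonneg (X : Matrix (Fin a) (Fin b) ℝ) : 0 ≤ froNorm X :=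
  Real.sqrt_nonneg _

lemma ip_self_eq_zero {X : Matrix (Fin a) (Fin b) ℝ} (h : ip X X = 0) : X = 0 := by
  have h1 := (Finset.sum_eq_zero_iff_of_nonneg
    (fun i _ => Finset.sum_nonneg fun j _ => mul_self_nonneg (X i j))).mp h
  ext i j
  have h2 := (Finset.sum_eq_zero_iff_of_nonneg
    (fun j _ => mul_self_nonneg (X i j))).mp (h1 i (Finset.mem_univ i)) j (Finset.mem_univ j)
  simpa using mul_self_eq_zero.mp h2

lemma ip_le (X Y : Matrix (Fin a) (Fin b) ℝ) : ip X Y ≤ froNorm X * froNorm Y := by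
  have key := Finset.sum_mul_sq_le_sq_mul_sq Finset.univ
    (fun p : Fin a × Fin b => X p.1 p.2) (fun p : Fin a × Fin b => Y p.1 p.2)
  have e1 : ip X Y = ∑ p : Fin a × Fin b, X p.1 p.2 * Y p.1 p.2 := by
    rw [Fintype.sum_prod_type]; rfl
  have e2 : ip X X = ∑ p : Fin a × Fin b, X p.1 p.2 ^ 2 := by
    rw [Fintype.sum_prod_type]; simp [ip, pow_two]
  have e3 : ip Y Y = ∑ p : Fin a × Fin b, Y p.1 p.2 ^ 2 := by
    rw [Fintype.sum_prod_type]; simp [ip, pow_two]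
  have h2 : (ip X Y) ^ 2 ≤ ip X X * ip Y Y := by rw [e1, e2, e3]; exact key
  calc ip X Y ≤ |ip X Y| := le_abs_self _
    _ = Real.sqrt ((ip X Y) ^ 2) := (Real.sqrt_sq_eq_abs _).symm
    _ ≤ Real.sqrt (ip X X * ip Y Y) := Real.sqrt_le_sqrt h2
    _ = froNorm X * froNorm Y := by
        rw [Real.sqrt_mul (ip_self_nonneg X), froNorm_eq, froNorm_eq]

lemma froNorm_smul (c : ℝ) (X : Matrix (Fin a) (Fin b) ℝ) :
    froNorm (c • X) = |c| * froNorm X := by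
  rw [froNorm_eq, froNorm_eq, ip_smul_left, ip_comm, ip_smul_left, ← mul_assoc,
    Real.sqrt_mul (mul_self_nonneg c), Real.sqrt_mul_self_eq_abs]

lemma ip_expand (X Y : Matrix (Fin a) (Fin b) ℝ) (c : ℝ) :
    ip (X - c • Y) (X - c • Y) = ip X X - 2 * c * ip X Y + c ^ 2 * ip Y Y := by
  simp only [ip, Finset.mul_sum, ← Finset.sum_sub_distrib, ← Finset.sum_add_distrib]
  refine Finset.sum_congr rfl fun i _ => Finset.sum_congr rfl fun j _ => ?_
  simp only [Matrix.sub_apply, Matrix.smul_apply, smul_eq_mul]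
  ring

lemma pairNorm_sub (W Z : Matrix (Fin a) (Fin b) ℝ × Matrix (Fin a) (Fin b) ℝ) :
    pairNorm (W - Z) =
      Real.sqrt (ip (W.1 - Z.1) (W.1 - Z.1) + ip (W.2 - Z.2) (W.2 - Z.2)) := by
  simp [pairNorm, ip, pow_two, Matrix.sub_apply]

end Stmt12Aux

open Stmt12Aux in
theorem stmt12 {n₁ n₂ : ℕ} (M : Matrix (Fin n₁) (Fin n₂) ℝ) (ε : ℝ) (hε : 0 ≤ ε)
    (C : Set (Matrix (Fin n₁) (Fin n₂) ℝ × Matrix (Fin n₁) (Fin n₂) ℝ))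
    (hC : C = {P | froNorm (P.1 + P.2 - M) ≤ ε})
    (Z : Matrix (Fin n₁) (Fin n₂) ℝ × Matrix (Fin n₁) (Fin n₂) ℝ)
    (R : Matrix (Fin n₁) (Fin n₂) ℝ) (hR : R = Z.1 + Z.2 - M)
    (μ : ℝ)
    (hμ0 : R = 0 → μ = 0)
    (hμ : R ≠ 0 → μ = max 0 ((froNorm R - ε) / (2 * froNorm R))) :
    ∀ P : Matrix (Fin n₁) (Fin n₂) ℝ × Matrix (Fin n₁) (Fin n₂) ℝ,
      (P ∈ C ∧ ∀ W ∈ C, pairNorm (P - Z) ≤ pairNorm (W - Z)) ↔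
        P = (Z.1 - μ • R, Z.2 - μ • R) := by
  set r := froNorm R with hr
  have hrnn : 0 ≤ r := froNorm_nonneg R
  have hρ : ip R R = r ^ 2 := (sq_froNorm R).symm
  have hμnn : 0 ≤ μ := by
    by_cases h : R = 0
    · rw [hμ0 h]
    · rw [hμ h]; exact le_max_left _ _
  -- membership of the candidate projection
  have hcomb : (Z.1 - μ • R) + (Z.2 - μ • R) - M = (1 - 2 * μ) • R := by
    have h1 : (Z.1 - μ • R) + (Z.2 - μ • R) - M = (Z.1 + Z.2 - M) - (2 * μ) • R := by
      module
    rw [h1, ← hR]; module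
  have hrpos_of : R ≠ 0 → 0 < r := by
    intro hR0
    rcases eq_or_lt_of_le hrnn with h0 | h0
    · exact absurd (ip_self_eq_zero (by rw [hρ, ← h0]; norm_num)) hR0
    · exact h0
  have hPstarC : (Z.1 - μ • R, Z.2 - μ • R) ∈ C := by
    rw [hC]
    show froNorm ((Z.1 - μ • R) + (Z.2 - μ • R) - M) ≤ ε
    rw [hcomb]
    by_cases hR0 : R = 0
    · rw [hR0, smul_zero]
      simpa [froNorm] using hε
    · have hrpos : 0 < r := hrpos_of hR0
      by_cases hεr : r ≤ ε
      · have hμ0' : μ = 0 := by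
          rw [hμ hR0]
          apply max_eq_left
          rw [div_nonpos_iff]
          right
          constructor <;> linarith
        rw [hμ0']
        norm_num
        exact hεr
      · push_neg at hεr
        have hμval : μ = (r - ε) / (2 * r) := by
          rw [hμ hR0]
          exact max_eq_right (div_nonneg (by linarith) (by linarith))
        rw [froNorm_smul]
        have h12 : 1 - 2 * μ = ε / r := by
          rw [hμval]; field_simp; ring
        rw [h12, abs_of_nonneg (div_nonneg hε hrnn), div_mul_cancel₀ _ (ne_of_gt hrpos)]
  -- the variational inequality
  have hK : ∀ W ∈ C, μ * (ip (W.1 - Z.1) R + ip (W.2 - Z.2) R) + 2 * μ ^ 2 * r ^ 2 ≤ 0 := by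
    intro W hW
    by_cases hμz : μ = 0
    · simp [hμz]
    · have hμpos : 0 < μ := lt_of_le_of_ne hμnn (Ne.symm hμz)
      have hR0 : R ≠ 0 := fun h => hμz (hμ0 h)
      have hrpos : 0 < r := hrpos_of hR0
      have hεr : ε < r := by
        by_contra hle
        push_neg at hle
        apply hμz
        rw [hμ hR0]
        apply max_eq_left
        rw [div_nonpos_iff]
        right
        constructor <;> linarith
      have hμval : μ = (r - ε) / (2 * r) := by
        rw [hμ hR0]
        exact max_eq_right (div_nonneg (by linarith) (by linarith))
      have hWC : froNorm (W.1 + W.2 - M) ≤ ε := by rw [hC] at hW; exact hW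
      have hsplit : W.1 + W.2 - M = R + ((W.1 - Z.1) + (W.2 - Z.2)) := by
        rw [hR]; module
      have hCS : ip (W.1 + W.2 - M) R ≤ ε * r :=
        le_trans (ip_le _ _) (mul_le_mul_of_nonneg_right hWC hrnn)
      have hexp : ip (W.1 + W.2 - M) R = r ^ 2 + (ip (W.1 - Z.1) R + ip (W.2 - Z.2) R) := by
        rw [hsplit, ip_add_left, ip_add_left, hρ]
      have hAB : ip (W.1 - Z.1) R + ip (W.2 - Z.2) R ≤ ε * r - r ^ 2 := by linarith
      have h2μ : 2 * μ * r ^ 2 = (r - ε) * r := by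
        rw [hμval]; field_simp
      have h3 : 2 * μ ^ 2 * r ^ 2 = μ * ((r - ε) * r) := by rw [← h2μ]; ring
      have h4 : μ * (ε * r - r ^ 2) + μ * ((r - ε) * r) = 0 := by ring
      have h5 := mul_le_mul_of_nonneg_left hAB hμnn
      linarith
  -- per-component expansion identity
  have comp : ∀ X Y : Matrix (Fin n₁) (Fin n₂) ℝ,
      ip (X - Y) (X - Y) =
        ip (X - (Y - μ • R)) (X - (Y - μ • R)) - 2 * μ * ip (X - Y) R - μ ^ 2 * r ^ 2 := by
    intro X Y
    have h1 : X - Y = (X - (Y - μ • R)) - μ • R := by module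
    have h2 : ip (X - (Y - μ • R)) R = ip (X - Y) R + μ * ip R R := by
      have h3 : X - (Y - μ • R) = (X - Y) + μ • R := by module
      rw [h3, ip_add_left, ip_smul_left]
    calc ip (X - Y) (X - Y)
        = ip ((X - (Y - μ • R)) - μ • R) ((X - (Y - μ • R)) - μ • R) := by rw [← h1]
      _ = ip (X - (Y - μ • R)) (X - (Y - μ • R)) - 2 * μ * ip (X - (Y - μ • R)) R
            + μ ^ 2 * ip R R := ip_expand _ _ _
      _ = _ := by rw [h2, hρ]; ring
  -- squared distance of candidate
  have hsqstar : ip ((Z.1 - μ • R) - Z.1) ((Z.1 - μ • R) - Z.1) = μ ^ 2 * r ^ 2 := by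
    have h1 : (Z.1 - μ • R) - Z.1 = (-μ) • R := by module
    rw [h1, ip_smul_left, ip_comm, ip_smul_left, hρ]; ring
  have hsqstar2 : ip ((Z.2 - μ • R) - Z.2) ((Z.2 - μ • R) - Z.2) = μ ^ 2 * r ^ 2 := by
    have h1 : (Z.2 - μ • R) - Z.2 = (-μ) • R := by module
    rw [h1, ip_smul_left, ip_comm, ip_smul_left, hρ]; ring
  intro P
  constructor
  · rintro ⟨hPC, hmin⟩
    have h1 := hmin _ hPstarC
    rw [pairNorm_sub, pairNorm_sub] at h1
    have ha : 0 ≤ ip (P.1 - Z.1) (P.1 - Z.1) + ip (P.2 - Z.2) (P.2 - Z.2) :=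
      add_nonneg (ip_self_nonneg _) (ip_self_nonneg _)
    have hb :
        ip ((Z.1 - μ • R, Z.2 - μ • R).1 - Z.1) ((Z.1 - μ • R, Z.2 - μ • R).1 - Z.1) +
          ip ((Z.1 - μ • R, Z.2 - μ • R).2 - Z.2) ((Z.1 - μ • R, Z.2 - μ • R).2 - Z.2) =
          2 * μ ^ 2 * r ^ 2 := by
      show ip ((Z.1 - μ • R) - Z.1) _ + ip ((Z.2 - μ • R) - Z.2) _ = _
      rw [hsqstar, hsqstar2]; ring
    rw [hb] at h1
    have hble : ip (P.1 - Z.1) (P.1 - Z.1) + ip (P.2 - Z.2) (P.2 - Z.2)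
        ≤ 2 * μ ^ 2 * r ^ 2 := by
      have hbnn : (0:ℝ) ≤ 2 * μ ^ 2 * r ^ 2 := by positivity
      nlinarith [Real.sq_sqrt ha, Real.sq_sqrt hbnn, Real.sqrt_nonneg
        (ip (P.1 - Z.1) (P.1 - Z.1) + ip (P.2 - Z.2) (P.2 - Z.2)),
        Real.sqrt_nonneg (2 * μ ^ 2 * r ^ 2)]
    have c1 := comp P.1 Z.1
    have c2 := comp P.2 Z.2
    have hKP := hK P hPC
    have hd1 : ip (P.1 - (Z.1 - μ • R)) (P.1 - (Z.1 - μ • R)) = 0 := by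
      have := ip_self_nonneg (P.1 - (Z.1 - μ • R))
      have := ip_self_nonneg (P.2 - (Z.2 - μ • R))
      linarith
    have hd2 : ip (P.2 - (Z.2 - μ • R)) (P.2 - (Z.2 - μ • R)) = 0 := by
      have := ip_self_nonneg (P.1 - (Z.1 - μ • R))
      have := ip_self_nonneg (P.2 - (Z.2 - μ • R))
      linarith
    rw [Prod.ext_iff]
    exact ⟨sub_eq_zero.mp (ip_self_eq_zero hd1), sub_eq_zero.mp (ip_self_eq_zero hd2)⟩
  · rintro rfl
    refine ⟨hPstarC, fun W hW => ?_⟩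
    rw [pairNorm_sub, pairNorm_sub]
    apply Real.sqrt_le_sqrt
    have c1 := comp W.1 Z.1
    have c2 := comp W.2 Z.2
    have hKW := hK W hW
    have d1 := ip_self_nonneg (W.1 - (Z.1 - μ • R))
    have d2 := ip_self_nonneg (W.2 - (Z.2 - μ • R))
    show ip ((Z.1 - μ • R) - Z.1) _ + ip ((Z.2 - μ • R) - Z.2) _ ≤ _
    rw [hsqstar, hsqstar2]
    linarith
end
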